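/- Let λ be cylindric and μ a multipartition with μ^R = λ. Suppose μ^- is a multipartition of n-k with μ^- →^{j:k} μ and (μ^-)^R = λ^-. Then the coefficient of μ in f_j^{(k)} · μ^- in the Fock space equals v^{R(μ) - R(μ^-)}; equivalently, N_j(μ^-, μ) = R(μ) - R(μ^-). -/
import Mathlib


open scoped Classical

namespace AK

/-- A partition, given by its parts indexed from 1 (index 0 unused and set to 0),
finitely supported and weakly decreasing on positive indices. -/
def IsPartitionF (p : ℕ →₀ ℕ) : Prop :=
  p 0 = 0 ∧ ∀ i j : ℕ, 1 ≤ i → i ≤ j → p j ≤ p i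

/-- An `l`-multipartition: rows `0,…,l-1` are partitions, rows `≥ l` are zero. -/
def IsMultipartition (l : ℕ) (lam : ℕ → ℕ →₀ ℕ) : Prop :=
  (∀ c, IsPartitionF (lam c)) ∧ ∀ c, l ≤ c → lam c = 0

/-- A multicharge: `s` is weakly increasing on `{0,…,l-1}`. -/
def IsMulticharge (l : ℕ) (s : ℕ → ℤ) : Prop :=
  ∀ c c' : ℕ, c ≤ c' → c' < l → s c ≤ s c'

/-- The rank of an `l`-multipartition. -/
def rank (l : ℕ) (lam : ℕ → ℕ →₀ ℕ) : ℕ :=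
  ∑ c ∈ Finset.range l, (lam c).sum fun _ v => v

/-- The entry of the shifted `s`-symbol of size `h` in row `c` at position `i`
(counted from the right): `λ^c_i - i + s_c + h`. -/
def symbEntry (s : ℕ → ℤ) (h : ℕ) (lam : ℕ → ℕ →₀ ℕ) (c i : ℕ) : ℤ :=
  ((lam c) i : ℤ) - (i : ℤ) + s c + (h : ℤ)

/-- `λ` is cylindric for the multicharge `s`: `λ^c_i ≥ λ^{c+1}_{i+s_{c+1}-s_c}`. -/
def Cylindric (l : ℕ) (s : ℕ → ℤ) (lam : ℕ → ℕ →₀ ℕ) : Prop :=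
  ∀ c : ℕ, c + 1 < l → ∀ i : ℕ, 1 ≤ i →
    (lam (c+1)) (i + (s (c+1) - s c).toNat) ≤ (lam c) i

/-- The shifted symbol is standard: columns weakly decrease from top to bottom, i.e.
`B^c_i ≥ B^{c+1}_{i+s_{c+1}-s_c}`. -/
def Standard (l : ℕ) (s : ℕ → ℤ) (h : ℕ) (lam : ℕ → ℕ →₀ ℕ) : Prop :=
  ∀ c : ℕ, c + 1 < l → ∀ i : ℕ, 1 ≤ i →
    symbEntry s h lam (c+1) (i + (s (c+1) - s c).toNat) ≤ symbEntry s h lam c i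

/-- The multiset of entries of the column of the symbol with column coordinate `j`
(row `c` meets this column at position `j + s_c`, when `j + s_c ≥ 1`). -/
def columnMultiset (l : ℕ) (s : ℕ → ℤ) (h : ℕ) (lam : ℕ → ℕ →₀ ℕ) (j : ℤ) : Multiset ℤ :=
  (((Finset.range l).filter (fun c => 1 ≤ j + s c)).val).map
    (fun c => symbEntry s h lam c (j + s c).toNat)

/-- `μ` is the regularization `λ^R` of `λ`: a multipartition whose symbol is standard and
whose columns carry the same multisets of entries as those of the symbol of `λ`. -/
def IsRegularization (l : ℕ) (s : ℕ → ℤ) (lam mu : ℕ → ℕ →₀ ℕ) : Prop :=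
  IsMultipartition l mu ∧ (∀ h : ℕ, Standard l s h mu) ∧
  ∀ (h : ℕ) (j : ℤ), columnMultiset l s h mu j = columnMultiset l s h lam j

/-- The dominance order: `lam ⊵ mu`. -/
def Dominates (l : ℕ) (lam mu : ℕ → ℕ →₀ ℕ) : Prop :=
  ∀ c : ℕ, c < l → ∀ k : ℕ,
    ((∑ i ∈ Finset.range c, (mu i).sum fun _ v => v) + ∑ j ∈ Finset.range k, (mu c) (j+1))
      ≤ ((∑ i ∈ Finset.range c, (lam i).sum fun _ v => v) + ∑ j ∈ Finset.range k, (lam c) (j+1))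

/-- The value `x` occurs in row `c` of the shifted symbol of size `h`. -/
def InRow (s : ℕ → ℤ) (h : ℕ) (lam : ℕ → ℕ →₀ ℕ) (c : ℕ) (x : ℤ) : Prop :=
  ∃ p : ℕ, 1 ≤ p ∧ (p : ℤ) ≤ (h : ℤ) + s c ∧ symbEntry s h lam c p = x

/-- `R(λ)_{(j,c)}`: the number of rows `c' > c` with `B^c_j < B^{c'}_{j+s_{c'}-s_c}` and
`B^c_j` not occurring in row `c'`. -/
noncomputable def RstatAt (l : ℕ) (s : ℕ → ℤ) (h : ℕ) (lam : ℕ → ℕ →₀ ℕ) (c j : ℕ) : ℕ :=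
  ((Finset.range l).filter (fun c' => c < c' ∧
      symbEntry s h lam c j < symbEntry s h lam c' (j + (s c' - s c).toNat) ∧
      ¬ InRow s h lam c' (symbEntry s h lam c j))).card

/-- The regularization statistic `R(λ)`. -/
noncomputable def Rstat (l : ℕ) (s : ℕ → ℤ) (h : ℕ) (lam : ℕ → ℕ →₀ ℕ) : ℕ :=
  ∑ c ∈ Finset.range l, ∑ j ∈ Finset.Icc 1 (((h : ℤ) + s c).toNat), RstatAt l s h lam c j

/-- `h` is an admissible size for the symbol of `λ`: every row is nonempty and long enough
to contain all nonzero parts. -/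
def Admissible (l : ℕ) (s : ℕ → ℤ) (h : ℕ) (lam : ℕ → ℕ →₀ ℕ) : Prop :=
  ∀ c : ℕ, c < l → 1 ≤ (h : ℤ) + s c ∧ (lam c) (((h : ℤ) + s c).toNat) = 0

/-- `mu = lam⁻` is obtained from the nonempty cylindric `lam` by the reduction step:
`c0` is the least index of a nonempty component, `i0` the minimal position of a gap,
and the `r0` equal column entries `j(λ)` are decreased by `1`. -/
def IsReduction (l : ℕ) (s : ℕ → ℤ) (lam mu : ℕ → ℕ →₀ ℕ) : Prop :=
  ∃ c0 i0 r0 : ℕ, c0 < l ∧ (lam c0) 1 ≠ 0 ∧ (∀ c, c < c0 → (lam c) 1 = 0) ∧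
    1 ≤ i0 ∧ (lam c0) (i0+1) < (lam c0) i0 ∧
    (∀ i, 1 ≤ i → i < i0 → (lam c0) (i+1) = (lam c0) i) ∧
    1 ≤ r0 ∧ c0 + r0 ≤ l ∧
    (∀ k, k < r0 → (lam (c0+k)) (i0 + (s (c0+k) - s c0).toNat) = (lam c0) i0) ∧
    (c0 + r0 = l ∨ (lam (c0+r0)) (i0 + (s (c0+r0) - s c0).toNat) ≠ (lam c0) i0) ∧
    (∀ c i, (mu c) i =
      if c0 ≤ c ∧ c < c0 + r0 ∧ i = i0 + (s c - s c0).toNat then (lam c) i - 1 else (lam c) i)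

/-- Row `c` of the symbol of `xi` is obtained from that of `nu` by replacing the
entry `j+h-1` with `j+h`. -/
def ArrowRow (s : ℕ → ℤ) (h : ℕ) (j : ℤ) (nu xi : ℕ → ℕ →₀ ℕ) (c : ℕ) : Prop :=
  ∃ p : ℕ, 1 ≤ p ∧ (p : ℤ) ≤ (h : ℤ) + s c ∧
    symbEntry s h nu c p = j + h - 1 ∧ symbEntry s h xi c p = j + h ∧
    ∀ i, 1 ≤ i → i ≠ p → symbEntry s h xi c i = symbEntry s h nu c i

/-- `nu →^{j:k} xi` along the set `rows` of `k` distinct rows. -/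
def Arrow (l : ℕ) (s : ℕ → ℤ) (h : ℕ) (j : ℤ) (rows : Finset ℕ)
    (nu xi : ℕ → ℕ →₀ ℕ) : Prop :=
  (∀ c ∈ rows, c < l) ∧ (∀ c ∈ rows, ArrowRow s h j nu xi c) ∧
  ∀ c, c ∉ rows → ∀ i, 1 ≤ i → symbEntry s h xi c i = symbEntry s h nu c i

/-- Number of entries of row `c` of the symbol equal to `x`. -/
noncomputable def countVal (s : ℕ → ℤ) (h : ℕ) (lam : ℕ → ℕ →₀ ℕ) (c : ℕ) (x : ℤ) : ℕ :=
  ((Finset.Icc 1 (((h : ℤ) + s c).toNat)).filter (fun i => symbEntry s h lam c i = x)).card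

/-- The exponent `N_j(ν,ξ)` in the Fock space action of `f_j^{(k)}`. -/
noncomputable def Nstat (s : ℕ → ℤ) (h : ℕ) (j : ℤ) (rows : Finset ℕ)
    (nu xi : ℕ → ℕ →₀ ℕ) : ℤ :=
  ∑ t ∈ rows,
    ((∑ c ∈ Finset.range (t+1), (countVal s h xi c (j + h - 1) : ℤ))
      - ∑ c ∈ Finset.range (t+1), (countVal s h nu c (j + h) : ℤ))

section Helpers

open Finset

lemma symb_add_le {s : ℕ → ℤ} {h : ℕ} {η : ℕ → ℕ →₀ ℕ} {c : ℕ}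
    (hp : IsPartitionF (η c)) {i i' : ℕ} (h1 : 1 ≤ i) (hii : i ≤ i') :
    symbEntry s h η c i' + ((i' : ℤ) - (i : ℤ)) ≤ symbEntry s h η c i := by
  have := hp.2 i i' h1 hii
  unfold symbEntry
  have : ((η c) i' : ℤ) ≤ ((η c) i : ℤ) := by exact_mod_cast this
  linarith

lemma symb_lt {s : ℕ → ℤ} {h : ℕ} {η : ℕ → ℕ →₀ ℕ} {c : ℕ}
    (hp : IsPartitionF (η c)) {i i' : ℕ} (h1 : 1 ≤ i) (hii : i < i') :
    symbEntry s h η c i' < symbEntry s h η c i := by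
  have := symb_add_le (s := s) (h := h) hp h1 (le_of_lt hii)
  have : (1 : ℤ) ≤ (i' : ℤ) - (i : ℤ) := by
    have : (i : ℤ) < (i' : ℤ) := by exact_mod_cast hii
    omega
  have := symb_add_le (s := s) (h := h) hp h1 (le_of_lt hii)
  omega

lemma symb_inj {s : ℕ → ℤ} {h : ℕ} {η : ℕ → ℕ →₀ ℕ} {c : ℕ}
    (hp : IsPartitionF (η c)) {i i' : ℕ} (h1 : 1 ≤ i) (h1' : 1 ≤ i')
    (he : symbEntry s h η c i = symbEntry s h η c i') : i = i' := by
  rcases lt_trichotomy i i' with hlt | heq | hgt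
  · have := symb_lt (s := s) (h := h) hp h1 hlt; omega
  · exact heq
  · have := symb_lt (s := s) (h := h) hp h1' hgt; omega

lemma empty_row {p : ℕ →₀ ℕ} (hp : IsPartitionF p) (h0 : p 1 = 0) {i : ℕ} (h1 : 1 ≤ i) :
    p i = 0 := by
  have := hp.2 1 i le_rfl h1; omega

lemma standard_chain {l : ℕ} {s : ℕ → ℤ} {h : ℕ} {η : ℕ → ℕ →₀ ℕ}
    (hs : IsMulticharge l s) (hst : Standard l s h η) :
    ∀ d c i, c + d < l → 1 ≤ i →
      symbEntry s h η (c + d) (i + (s (c + d) - s c).toNat) ≤ symbEntry s h η c i := by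
  intro d
  induction d with
  | zero => intro c i _ _; simp
  | succ d ih =>
    intro c i hl h1
    have hdl : c + d < l := by omega
    have hcd : s c ≤ s (c + d) := hs c (c + d) (by omega) hdl
    have hdd : s (c + d) ≤ s (c + d + 1) := hs (c + d) (c + d + 1) (by omega) (by omega)
    have step := hst (c + d) (by omega) (i + (s (c + d) - s c).toNat) (by omega)
    have hpos : (i + (s (c + d) - s c).toNat) + (s (c + d + 1) - s (c + d)).toNat
        = i + (s (c + d + 1) - s c).toNat := by omega
    rw [hpos] at step
    exact le_trans step (ih c i hdl h1)

lemma standard_chain' {l : ℕ} {s : ℕ → ℤ} {h : ℕ} {η : ℕ → ℕ →₀ ℕ}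
    (hs : IsMulticharge l s) (hst : Standard l s h η) {c c' : ℕ}
    (hcc : c ≤ c') (hl : c' < l) {i : ℕ} (h1 : 1 ≤ i) :
    symbEntry s h η c' (i + (s c' - s c).toNat) ≤ symbEntry s h η c i := by
  obtain ⟨d, rfl⟩ := Nat.exists_eq_add_of_le hcc
  exact standard_chain hs hst d c i hl h1

lemma cyl_chain {l : ℕ} {s : ℕ → ℤ} {η : ℕ → ℕ →₀ ℕ}
    (hs : IsMulticharge l s) (hcyl : Cylindric l s η) :
    ∀ d c i, c + d < l → 1 ≤ i →
      (η (c + d)) (i + (s (c + d) - s c).toNat) ≤ (η c) i := by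
  intro d
  induction d with
  | zero => intro c i _ _; simp
  | succ d ih =>
    intro c i hl h1
    have hdl : c + d < l := by omega
    have hcd : s c ≤ s (c + d) := hs c (c + d) (by omega) hdl
    have hdd : s (c + d) ≤ s (c + d + 1) := hs (c + d) (c + d + 1) (by omega) (by omega)
    have step := hcyl (c + d) (by omega) (i + (s (c + d) - s c).toNat) (by omega)
    have hpos : (i + (s (c + d) - s c).toNat) + (s (c + d + 1) - s (c + d)).toNat
        = i + (s (c + d + 1) - s c).toNat := by omega
    rw [hpos] at step
    exact le_trans step (ih c i hdl h1)

lemma cyl_chain' {l : ℕ} {s : ℕ → ℤ} {η : ℕ → ℕ →₀ ℕ}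
    (hs : IsMulticharge l s) (hcyl : Cylindric l s η) {c c' : ℕ}
    (hcc : c ≤ c') (hl : c' < l) {i : ℕ} (h1 : 1 ≤ i) :
    (η c') (i + (s c' - s c).toNat) ≤ (η c) i := by
  obtain ⟨d, rfl⟩ := Nat.exists_eq_add_of_le hcc
  exact cyl_chain hs hcyl d c i hl h1

lemma inrow_congr {s : ℕ → ℤ} {h : ℕ} {η η' : ℕ → ℕ →₀ ℕ} {c : ℕ}
    (he : ∀ i, 1 ≤ i → symbEntry s h η c i = symbEntry s h η' c i) (x : ℤ) :
    InRow s h η c x ↔ InRow s h η' c x := by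
  constructor
  · rintro ⟨p, h1, h2, h3⟩; exact ⟨p, h1, h2, (he p h1).symm.trans h3⟩
  · rintro ⟨p, h1, h2, h3⟩; exact ⟨p, h1, h2, (he p h1).trans h3⟩

lemma mem_col_iff {l : ℕ} {s : ℕ → ℤ} {h : ℕ} {η : ℕ → ℕ →₀ ℕ} {C x : ℤ} :
    x ∈ columnMultiset l s h η C ↔
      ∃ c, c < l ∧ 1 ≤ C + s c ∧ symbEntry s h η c ((C + s c).toNat) = x := by
  unfold columnMultiset
  simp only [Multiset.mem_map, Finset.mem_val, Finset.mem_filter, Finset.mem_range]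
  constructor
  · rintro ⟨c, ⟨hc, hc1⟩, he⟩; exact ⟨c, hc, hc1, he⟩
  · rintro ⟨c, hc, hc1, he⟩; exact ⟨c, ⟨hc, hc1⟩, he⟩

lemma count_col {l : ℕ} {s : ℕ → ℤ} {h : ℕ} (η : ℕ → ℕ →₀ ℕ) (C x : ℤ) :
    Multiset.count x (columnMultiset l s h η C) =
      (((Finset.range l).filter (fun c => 1 ≤ C + s c)).filter
        (fun c => symbEntry s h η c ((C + s c).toNat) = x)).card := by
  unfold columnMultiset
  rw [Multiset.count_map]
  rw [← Finset.filter_val]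
  show Multiset.card _ = _
  rw [Finset.card]
  congr 1
  congr 1
  apply Finset.filter_congr
  intro c _
  simp [eq_comm]

end Helpers
/-- if `μ^R = λ` (cylindric), `μ⁻ →^{j:k} μ` and `(μ⁻)^R = λ⁻`, then the
coefficient of `μ` in `f_j^{(k)}·μ⁻` is `v^{R(μ)-R(μ⁻)}`; equivalently
`N_j(μ⁻,μ) = R(μ) - R(μ⁻)`. -/
theorem coefficient_of_regularization (l k : ℕ) (s : ℕ → ℤ) (hs : IsMulticharge l s)
    (h : ℕ) (j : ℤ) (lam lamM mu muM : ℕ → ℕ →₀ ℕ)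
    (hmplam : IsMultipartition l lam) (hmpmu : IsMultipartition l mu)
    (hmpmuM : IsMultipartition l muM)
    (hcyl : Cylindric l s lam)
    (hregmu : IsRegularization l s mu lam)
    (hred : IsReduction l s lam lamM)
    (hregmuM : IsRegularization l s muM lamM)
    (rows : Finset ℕ) (hcard : rows.card = k)
    (harr : Arrow l s h j rows muM mu)
    (hadm : Admissible l s h mu) (hadmM : Admissible l s h muM) :
    Nstat s h j rows muM mu = (Rstat l s h mu : ℤ) - (Rstat l s h muM : ℤ) := by
  classical
  obtain ⟨hmpl, hstl, hcols⟩ := hregmu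
  obtain ⟨hmplM, hstlM, hcolsM⟩ := hregmuM
  obtain ⟨c0, i0, r0, hc0l, hne0, hbefore, hi01, hdesc, hflat, hr01, hrl, hrun, halt, hform⟩ := hred
  obtain ⟨hrowlt, harr1, harr2⟩ := harr
  choose! pfun hpf using harr1
  set J : ℤ := (i0 : ℤ) - s c0 with hJ
  set bprime : ℤ := symbEntry s h lam c0 i0 with hbp'
  have hbp : bprime = ((lam c0 i0 : ℤ)) - (i0 : ℤ) + s c0 + (h : ℤ) := rfl
  have hpos : 1 ≤ lam c0 i0 := by omega
  have hlam0 : ∀ c i, c < c0 → 1 ≤ i → lam c i = 0 := by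
    intro c i hc h1; exact empty_row (hmpl.1 c) (hbefore c hc) h1
  -- entries of the run in lam and lamM
  have hrunE : ∀ kk, kk < r0 → symbEntry s h lam (c0 + kk) ((J + s (c0 + kk)).toNat) = bprime := by
    intro kk hk
    have hcl : c0 + kk < l := by omega
    have hsle : s c0 ≤ s (c0 + kk) := hs c0 (c0 + kk) (by omega) hcl
    have hq : (J + s (c0 + kk)).toNat = i0 + (s (c0 + kk) - s c0).toNat := by omega
    have hv := hrun kk hk
    rw [hq]
    unfold symbEntry
    rw [hv]
    push_cast
    omega
  have hrunEM : ∀ kk, kk < r0 → symbEntry s h lamM (c0 + kk) ((J + s (c0 + kk)).toNat) = bprime - 1 := by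
    intro kk hk
    have hcl : c0 + kk < l := by omega
    have hsle : s c0 ≤ s (c0 + kk) := hs c0 (c0 + kk) (by omega) hcl
    have hq : (J + s (c0 + kk)).toNat = i0 + (s (c0 + kk) - s c0).toNat := by omega
    have hv := hrun kk hk
    have hvM : lamM (c0 + kk) (i0 + (s (c0 + kk) - s c0).toNat)
        = lam (c0 + kk) (i0 + (s (c0 + kk) - s c0).toNat) - 1 := by
      rw [hform, if_pos ⟨by omega, by omega, rfl⟩]
    rw [hq]
    unfold symbEntry
    rw [hvM, hv]
    omega
  have hlamM_out : ∀ (c : ℕ) (i : ℕ), c < l → ¬(c0 ≤ c ∧ c < c0 + r0 ∧ (i : ℤ) = J + s c) → lamM c i = lam c i := by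
    intro c i hcl hn
    rw [hform, if_neg]
    rintro ⟨h1, h2, h3⟩
    have hsle : s c0 ≤ s c := hs c0 c h1 hcl
    exact hn ⟨h1, h2, by omega⟩
  -- rows above c0 do not meet column J
  have hnopart : ∀ c, c < c0 → ¬(1 ≤ J + s c) := by
    intro c hc hcon
    have hcl : c < l := by omega
    have hsle : s c ≤ s c0 := hs c c0 (by omega) hc0l
    have hq1 : 1 ≤ (J + s c).toNat := by omega
    have hchain := standard_chain' hs (hstl h) (le_of_lt hc) hc0l hq1
    have hq : (J + s c).toNat + (s c0 - s c).toNat = i0 := by omega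
    rw [hq] at hchain
    have h0 : lam c ((J + s c).toNat) = 0 := hlam0 c _ hc hq1
    unfold symbEntry at hchain
    rw [h0] at hchain
    omega
  -- rows below the run have column-J entry < bprime
  have hbelowE : ∀ c, c0 + r0 ≤ c → c < l → symbEntry s h lam c ((J + s c).toNat) < bprime := by
    intro c hc hcl
    have hrl' : c0 + r0 < l := by omega
    have hne : lam (c0 + r0) (i0 + (s (c0 + r0) - s c0).toNat) ≠ lam c0 i0 := by
      rcases halt with h' | h'
      · omega
      · exact h'
    have hle : lam (c0 + r0) (i0 + (s (c0 + r0) - s c0).toNat) ≤ lam c0 i0 :=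
      cyl_chain' hs hcyl (by omega) hrl' hi01
    have hsle : s c0 ≤ s (c0 + r0) := hs c0 (c0 + r0) (by omega) hrl'
    have hsle2 : s (c0 + r0) ≤ s c := hs (c0 + r0) c hc hcl
    have hq0 : 1 ≤ (J + s (c0 + r0)).toNat := by omega
    have hchain := standard_chain' hs (hstl h) hc hcl hq0
    have hq : (J + s (c0 + r0)).toNat + (s c - s (c0 + r0)).toNat = (J + s c).toNat := by omega
    rw [hq] at hchain
    refine lt_of_le_of_lt hchain ?_
    have hq2 : (J + s (c0 + r0)).toNat = i0 + (s (c0 + r0) - s c0).toNat := by omega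
    rw [hq2]
    unfold symbEntry
    omega
  -- all column-J entries of lamM are ≤ bprime - 1
  have hcolJM : ∀ c, c < l → 1 ≤ J + s c → symbEntry s h lamM c ((J + s c).toNat) ≤ bprime - 1 := by
    intro c hcl hp
    rcases lt_or_ge c c0 with hc | hc
    · exact absurd hp (hnopart c hc)
    rcases lt_or_ge c (c0 + r0) with hc2 | hc2
    · have := hrunEM (c - c0) (by omega)
      rw [Nat.add_sub_cancel' hc] at this
      omega
    · have heq : lamM c ((J + s c).toNat) = lam c ((J + s c).toNat) := by
        apply hlamM_out c _ hcl
        rintro ⟨-, hlt, -⟩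
        omega
      have := hbelowE c hc2 hcl
      unfold symbEntry at this ⊢
      rw [heq]
      omega
  -- columns C > J of lam have entries < bprime - 1
  have hcolGT : ∀ C : ℤ, J < C → ∀ c, c < l → 1 ≤ C + s c →
      symbEntry s h lam c ((C + s c).toNat) < bprime - 1 := by
    intro C hJC c hcl hp
    rcases lt_or_ge c c0 with hc | hc
    · have h0 : lam c ((C + s c).toNat) = 0 := hlam0 c _ hc (by omega)
      unfold symbEntry
      rw [h0]
      omega
    · have hsle : s c0 ≤ s c := hs c0 c hc hcl
      have hq0 : 1 ≤ (C + s c0).toNat := by omega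
      have hchain := standard_chain' hs (hstl h) hc hcl hq0
      have hq : (C + s c0).toNat + (s c - s c0).toNat = (C + s c).toNat := by omega
      rw [hq] at hchain
      refine lt_of_le_of_lt hchain ?_
      have h2 := symb_add_le (s := s) (h := h) (hmpl.1 c0) (i := i0 + 1)
        (i' := (C + s c0).toNat) (by omega) (by omega)
      have h3 : symbEntry s h lam c0 (i0 + 1) ≤ bprime - 2 := by
        unfold symbEntry
        omega
      omega
  have hcolGTM : ∀ C : ℤ, J < C → ∀ c, c < l → 1 ≤ C + s c →
      symbEntry s h lamM c ((C + s c).toNat) < bprime - 1 := by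
    intro C hJC c hcl hp
    have heq : lamM c ((C + s c).toNat) = lam c ((C + s c).toNat) := by
      apply hlamM_out c _ hcl
      rintro ⟨h1, h2, h3⟩
      have hsle : s c0 ≤ s c := hs c0 c h1 hcl
      omega
    have := hcolGT C hJC c hcl hp
    unfold symbEntry at this ⊢
    rw [heq]
    exact this
  -- transfer to mu, muM
  have hcolmu : ∀ C, columnMultiset l s h mu C = columnMultiset l s h lam C :=
    fun C => (hcols h C).symm
  have hcolmuM : ∀ C, columnMultiset l s h muM C = columnMultiset l s h lamM C :=
    fun C => (hcolsM h C).symm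
  have T1 : ∀ c, c < l → 1 ≤ J + s c → symbEntry s h muM c ((J + s c).toNat) ≤ bprime - 1 := by
    intro c hcl hp
    have hmem : symbEntry s h muM c ((J + s c).toNat) ∈ columnMultiset l s h muM J :=
      mem_col_iff.mpr ⟨c, hcl, hp, rfl⟩
    rw [hcolmuM] at hmem
    obtain ⟨c'', hcl'', hp'', he''⟩ := mem_col_iff.mp hmem
    rw [← he'']
    exact hcolJM c'' hcl'' hp'' 
  have T2 : ∀ C : ℤ, J < C → ∀ c, c < l → 1 ≤ C + s c →
      symbEntry s h muM c ((C + s c).toNat) < bprime - 1 := by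
    intro C hJC c hcl hp
    have hmem : symbEntry s h muM c ((C + s c).toNat) ∈ columnMultiset l s h muM C :=
      mem_col_iff.mpr ⟨c, hcl, hp, rfl⟩
    rw [hcolmuM] at hmem
    obtain ⟨c'', hcl'', hp'', he''⟩ := mem_col_iff.mp hmem
    rw [← he'']
    exact hcolGTM C hJC c'' hcl'' hp'' 
  -- rows is nonempty
  have hrows_ne : rows.Nonempty := by
    rw [Finset.nonempty_iff_ne_empty]
    intro hemp
    have hEq : columnMultiset l s h mu J = columnMultiset l s h muM J := by
      unfold columnMultiset
      apply Multiset.map_congr rfl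
      intro c hcmem
      rw [Finset.mem_val, Finset.mem_filter] at hcmem
      exact harr2 c (by simp [hemp]) _ (by omega)
    have hmem : bprime ∈ columnMultiset l s h mu J := by
      rw [hcolmu]
      refine mem_col_iff.mpr ⟨c0, hc0l, by omega, ?_⟩
      have hq : (J + s c0).toNat = i0 := by omega
      rw [hq]
    rw [hEq, hcolmuM] at hmem
    obtain ⟨c'', hcl'', hp'', he''⟩ := mem_col_iff.mp hmem
    have := hcolJM c'' hcl'' hp''
    omega
  -- pinning: j + h = bprime and positions of the arrow
  have hkey : ∀ c ∈ rows, j + (h : ℤ) = bprime ∧ (pfun c : ℤ) = J + s c := by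
    intro c hc
    have hcl := hrowlt c hc
    obtain ⟨hp1, hp2, hp3, hp4, hp5⟩ := hpf c hc
    have hCpos : 1 ≤ ((pfun c : ℤ) - s c) + s c := by omega
    have hcnt1 := congrArg (Multiset.count (j + (h : ℤ))) (hcolmu ((pfun c : ℤ) - s c))
    have hcnt2 := congrArg (Multiset.count (j + (h : ℤ))) (hcolmuM ((pfun c : ℤ) - s c))
    rw [count_col, count_col] at hcnt1 hcnt2
    have hsub : ((Finset.range l).filter (fun c'' => 1 ≤ ((pfun c : ℤ) - s c) + s c'')).filter
          (fun c'' => symbEntry s h muM c'' ((((pfun c : ℤ) - s c) + s c'').toNat) = j + (h : ℤ))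
        ⊆ ((Finset.range l).filter (fun c'' => 1 ≤ ((pfun c : ℤ) - s c) + s c'')).filter
          (fun c'' => symbEntry s h mu c'' ((((pfun c : ℤ) - s c) + s c'').toNat) = j + (h : ℤ)) := by
      intro c'' hmem
      rw [Finset.mem_filter] at hmem ⊢
      obtain ⟨hmP, heq⟩ := hmem
      refine ⟨hmP, ?_⟩
      rw [Finset.mem_filter] at hmP
      have hq1 : 1 ≤ ((((pfun c : ℤ) - s c) + s c'')).toNat := by omega
      by_cases hcr : c'' ∈ rows
      · obtain ⟨hq1', hq2', hq3', hq4', hq5'⟩ := hpf c'' hcr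
        by_cases hqp : ((((pfun c : ℤ) - s c) + s c'')).toNat = pfun c''
        · rw [hqp, hq3'] at heq
          omega
        · rw [hq5' _ hq1 hqp]
          exact heq
      · rw [harr2 c'' hcr _ hq1]
        exact heq
    have hmemmu : c ∈ ((Finset.range l).filter (fun c'' => 1 ≤ ((pfun c : ℤ) - s c) + s c'')).filter
        (fun c'' => symbEntry s h mu c'' ((((pfun c : ℤ) - s c) + s c'').toNat) = j + (h : ℤ)) := by
      rw [Finset.mem_filter, Finset.mem_filter, Finset.mem_range]
      have hq : ((((pfun c : ℤ) - s c) + s c)).toNat = pfun c := by omega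
      exact ⟨⟨hcl, hCpos⟩, by rw [hq]; exact hp4⟩
    have hnot : c ∉ ((Finset.range l).filter (fun c'' => 1 ≤ ((pfun c : ℤ) - s c) + s c'')).filter
        (fun c'' => symbEntry s h muM c'' ((((pfun c : ℤ) - s c) + s c'').toNat) = j + (h : ℤ)) := by
      rw [Finset.mem_filter]
      rintro ⟨-, heq⟩
      have hq : ((((pfun c : ℤ) - s c) + s c)).toNat = pfun c := by omega
      rw [hq, hp3] at heq
      omega
    have hss := Finset.card_lt_card ((Finset.ssubset_iff_of_subset hsub).mpr ⟨c, hmemmu, hnot⟩)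
    have hnsub : ¬ (((Finset.range l).filter (fun c'' => 1 ≤ ((pfun c : ℤ) - s c) + s c'')).filter
          (fun c'' => symbEntry s h lam c'' ((((pfun c : ℤ) - s c) + s c'').toNat) = j + (h : ℤ))
        ⊆ ((Finset.range l).filter (fun c'' => 1 ≤ ((pfun c : ℤ) - s c) + s c'')).filter
          (fun c'' => symbEntry s h lamM c'' ((((pfun c : ℤ) - s c) + s c'').toNat) = j + (h : ℤ))) := by
      intro hsub'
      have := Finset.card_le_card hsub'
      omega
    obtain ⟨c'', hin, hnin⟩ := Finset.not_subset.mp hnsub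
    rw [Finset.mem_filter] at hin
    obtain ⟨hinP, hin2⟩ := hin
    have hninE : symbEntry s h lamM c'' ((((pfun c : ℤ) - s c) + s c'').toNat) ≠ j + (h : ℤ) := by
      intro hh
      exact hnin (Finset.mem_filter.mpr ⟨hinP, hh⟩)
    rw [Finset.mem_filter, Finset.mem_range] at hinP
    obtain ⟨hcl'', hpar''⟩ := hinP
    have hparts : lamM c'' ((((pfun c : ℤ) - s c) + s c'').toNat)
        ≠ lam c'' ((((pfun c : ℤ) - s c) + s c'').toNat) := by
      intro hh
      apply hninE
      unfold symbEntry at hin2 ⊢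
      rw [hh]
      exact hin2
    have hcond : c0 ≤ c'' ∧ c'' < c0 + r0 ∧
        (((((pfun c : ℤ) - s c) + s c'').toNat : ℕ) : ℤ) = J + s c'' := by
      by_contra hnc
      exact hparts (hlamM_out c'' _ hcl'' hnc)
    obtain ⟨hg1, hg2, hg3⟩ := hcond
    have hsle'' : s c0 ≤ s c'' := hs c0 c'' hg1 hcl''
    have hCJ : (pfun c : ℤ) - s c = J := by omega
    have hrunE'' := hrunE (c'' - c0) (by omega)
    rw [Nat.add_sub_cancel' hg1] at hrunE''
    have hq : ((((pfun c : ℤ) - s c) + s c'')).toNat = (J + s c'').toNat := by rw [hCJ]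
    rw [hq, hrunE''] at hin2
    exact ⟨hin2.symm, by omega⟩
  obtain ⟨c₁, hc₁⟩ := hrows_ne
  have hBb : j + (h : ℤ) = bprime := (hkey c₁ hc₁).1
  have hpJ : ∀ c ∈ rows, (pfun c : ℤ) = J + s c := fun c hc => (hkey c hc).2
  -- restated facts with j + h
  have T1' : ∀ c, c < l → 1 ≤ J + s c → symbEntry s h muM c ((J + s c).toNat) ≤ j + (h : ℤ) - 1 := by
    intro c hcl hp; have := T1 c hcl hp; omega
  have hOccA' : ∀ c, c < l → ∀ i, 1 ≤ i → symbEntry s h muM c i = j + (h : ℤ) - 1 → (i : ℤ) ≤ J + s c := by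
    intro c hcl i h1 he
    by_contra hgt
    push_neg at hgt
    have hp : 1 ≤ ((i : ℤ) - s c) + s c := by omega
    have := T2 ((i : ℤ) - s c) (by omega) c hcl hp
    have hq : (((i : ℤ) - s c) + s c).toNat = i := by omega
    rw [hq] at this
    omega
  have hOccB' : ∀ c, c < l → ∀ i, 1 ≤ i → symbEntry s h muM c i = j + (h : ℤ) → (i : ℤ) < J + s c := by
    intro c hcl i h1 he
    by_contra hge
    push_neg at hge
    rcases eq_or_lt_of_le hge with heq | hlt
    · have := T1' c hcl (by omega)
      have hq : (J + s c).toNat = i := by omega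
      rw [hq] at this
      omega
    · have hp : 1 ≤ ((i : ℤ) - s c) + s c := by omega
      have := T2 ((i : ℤ) - s c) (by omega) c hcl hp
      have hq : (((i : ℤ) - s c) + s c).toNat = i := by omega
      rw [hq] at this
      omega
  -- row shape facts for rows of the arrow
  have hup : ∀ t ∈ rows, ∀ q, 1 ≤ q → q < pfun t →
      j + (h : ℤ) < symbEntry s h muM t q ∧ j + (h : ℤ) < symbEntry s h mu t q := by
    intro t ht q h1 hlt
    obtain ⟨hp1, hp2, hp3, hp4, hp5⟩ := hpf t ht
    have hmu := symb_lt (s := s) (h := h) (hmpmu.1 t) h1 hlt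
    rw [hp4] at hmu
    have heq : symbEntry s h mu t q = symbEntry s h muM t q := hp5 q h1 (by omega)
    constructor <;> omega
  have hdn : ∀ t ∈ rows, ∀ q, pfun t < q →
      symbEntry s h muM t q ≤ j + (h : ℤ) - 2 ∧ symbEntry s h mu t q ≤ j + (h : ℤ) - 2 := by
    intro t ht q hlt
    obtain ⟨hp1, hp2, hp3, hp4, hp5⟩ := hpf t ht
    have hmuM := symb_lt (s := s) (h := h) (hmpmuM.1 t) hp1 hlt
    rw [hp3] at hmuM
    have heq : symbEntry s h mu t q = symbEntry s h muM t q := hp5 q (by omega) (by omega)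
    constructor <;> omega
  have hnoA_mu : ∀ t ∈ rows, ∀ q, 1 ≤ q → symbEntry s h mu t q ≠ j + (h : ℤ) - 1 := by
    intro t ht q h1
    obtain ⟨hp1, hp2, hp3, hp4, hp5⟩ := hpf t ht
    rcases lt_trichotomy q (pfun t) with hq | hq | hq
    · have := (hup t ht q h1 hq).2
      omega
    · rw [hq, hp4]
      omega
    · have := (hdn t ht q hq).2
      omega
  have hnoB_muM : ∀ t ∈ rows, ∀ q, 1 ≤ q → symbEntry s h muM t q ≠ j + (h : ℤ) := by
    intro t ht q h1
    obtain ⟨hp1, hp2, hp3, hp4, hp5⟩ := hpf t ht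
    rcases lt_trichotomy q (pfun t) with hq | hq | hq
    · have := (hup t ht q h1 hq).1
      omega
    · rw [hq, hp3]
      omega
    · have := (hdn t ht q hq).1
      omega
  have hInA_muM : ∀ t ∈ rows, InRow s h muM t (j + (h : ℤ) - 1) := by
    intro t ht; obtain ⟨h1, h2, h3, _, _⟩ := hpf t ht; exact ⟨pfun t, h1, h2, h3⟩
  have hInB_mu : ∀ t ∈ rows, InRow s h mu t (j + (h : ℤ)) := by
    intro t ht; obtain ⟨h1, h2, _, h4, _⟩ := hpf t ht; exact ⟨pfun t, h1, h2, h4⟩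
  have hnInA_mu : ∀ t ∈ rows, ¬ InRow s h mu t (j + (h : ℤ) - 1) := by
    rintro t ht ⟨p, h1, _, h3⟩; exact hnoA_mu t ht p h1 h3
  have hnInB_muM : ∀ t ∈ rows, ¬ InRow s h muM t (j + (h : ℤ)) := by
    rintro t ht ⟨p, h1, _, h3⟩; exact hnoB_muM t ht p h1 h3
  have hInEq : ∀ t ∈ rows, ∀ x : ℤ, x ≠ j + (h : ℤ) - 1 → x ≠ j + (h : ℤ) →
      (InRow s h mu t x ↔ InRow s h muM t x) := by
    intro t ht x hxa hxb
    obtain ⟨hp1, hp2, hp3, hp4, hp5⟩ := hpf t ht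
    constructor
    · rintro ⟨p, h1, h2, h3⟩
      refine ⟨p, h1, h2, ?_⟩
      by_cases hp' : p = pfun t
      · rw [hp', hp4] at h3
        exact absurd h3.symm hxb
      · rw [← hp5 p h1 hp']
        exact h3
    · rintro ⟨p, h1, h2, h3⟩
      refine ⟨p, h1, h2, ?_⟩
      by_cases hp' : p = pfun t
      · rw [hp', hp3] at h3
        exact absurd h3.symm hxa
      · rw [hp5 p h1 hp']
        exact h3
  have hEsame : ∀ c i, 1 ≤ i → (c ∉ rows ∨ i ≠ pfun c) →
      symbEntry s h mu c i = symbEntry s h muM c i := by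
    intro c i h1 hor
    by_cases hcr : c ∈ rows
    · obtain ⟨_, _, _, _, h5⟩ := hpf c hcr
      exact h5 i h1 (hor.resolve_left (by simp [hcr]))
    · exact harr2 c hcr i h1
  -- the pointwise delta computation
  have hdelta : ∀ c' ∈ Finset.range l, ∀ c ∈ Finset.range l, ∀ i ∈ Finset.Icc 1 (((h : ℤ) + s c).toNat),
      ((if c < c' ∧ symbEntry s h mu c i < symbEntry s h mu c' (i + (s c' - s c).toNat) ∧
          ¬ InRow s h mu c' (symbEntry s h mu c i) then (1 : ℤ) else 0)
        - (if c < c' ∧ symbEntry s h muM c i < symbEntry s h muM c' (i + (s c' - s c).toNat) ∧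
          ¬ InRow s h muM c' (symbEntry s h muM c i) then (1 : ℤ) else 0))
      = (if c' ∈ rows ∧ c < c' then
          ((if symbEntry s h muM c i = j + (h : ℤ) - 1 ∧ ¬(c ∈ rows ∧ i = pfun c) then (1 : ℤ) else 0)
            - (if symbEntry s h muM c i = j + (h : ℤ) then (1 : ℤ) else 0))
        else 0) := by
    intro c' hc'm c hcm i him
    rw [Finset.mem_range] at hc'm hcm
    rw [Finset.mem_Icc] at him
    set X : ℤ := symbEntry s h mu c i with hX
    set XM : ℤ := symbEntry s h muM c i with hXM
    set Y : ℤ := symbEntry s h mu c' (i + (s c' - s c).toNat) with hY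
    set YM : ℤ := symbEntry s h muM c' (i + (s c' - s c).toNat) with hYM
    by_cases hcc' : c < c'
    swap
    · have hP1 : ¬(c < c' ∧ X < Y ∧ ¬ InRow s h mu c' X) := fun hh => hcc' hh.1
      have hP2 : ¬(c < c' ∧ XM < YM ∧ ¬ InRow s h muM c' XM) := fun hh => hcc' hh.1
      have hP3 : ¬(c' ∈ rows ∧ c < c') := fun hh => hcc' hh.2
      rw [if_neg hP1, if_neg hP2, if_neg hP3]
      try norm_num
    have hscc' : s c ≤ s c' := hs c c' (le_of_lt hcc') hc'm
    have hm1 : 1 ≤ i + (s c' - s c).toNat := by omega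
    have hmz : ((i + (s c' - s c).toNat : ℕ) : ℤ) = (i : ℤ) + (s c' - s c) := by omega
    by_cases hc'r : c' ∈ rows
    · obtain ⟨hq1, hq2, hq3, hq4, hq5⟩ := hpf c' hc'r
      have hpj' : (pfun c' : ℤ) = J + s c' := hpJ c' hc'r
      have hT : c' ∈ rows ∧ c < c' := ⟨hc'r, hcc'⟩
      rw [if_pos hT]
      by_cases hcp : c ∈ rows ∧ i = pfun c
      · obtain ⟨hcr, hip⟩ := hcp
        obtain ⟨hr1, hr2, hr3, hr4, hr5⟩ := hpf c hcr
        have hpj : (pfun c : ℤ) = J + s c := hpJ c hcr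
        have hmp : i + (s c' - s c).toNat = pfun c' := by omega
        have e1 : X = j + (h : ℤ) := by rw [hX, hip]; exact hr4
        have e2 : Y = j + (h : ℤ) := by rw [hY, hmp]; exact hq4
        have e3 : XM = j + (h : ℤ) - 1 := by rw [hXM, hip]; exact hr3
        have e4 : YM = j + (h : ℤ) - 1 := by rw [hYM, hmp]; exact hq3
        have hP1 : ¬(c < c' ∧ X < Y ∧ ¬ InRow s h mu c' X) := by
          rintro ⟨-, hlt, -⟩; omega
        have hP2 : ¬(c < c' ∧ XM < YM ∧ ¬ InRow s h muM c' XM) := by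
          rintro ⟨-, hlt, -⟩; omega
        have hP3 : ¬(XM = j + (h : ℤ) - 1 ∧ ¬(c ∈ rows ∧ i = pfun c)) := by
          rintro ⟨-, hn⟩; exact hn ⟨hcr, hip⟩
        have hP4 : ¬(XM = j + (h : ℤ)) := by omega
        rw [if_neg hP1, if_neg hP2, if_neg hP3, if_neg hP4]
        try norm_num
      · have hsame : X = XM := by
          rw [hX, hXM]; exact hEsame c i him.1 (not_and_or.mp hcp)
        by_cases hxA : XM = j + (h : ℤ) - 1
        · have hcnr : c ∉ rows := by
            intro hcr
            obtain ⟨hr1, hr2, hr3, hr4, hr5⟩ := hpf c hcr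
            refine hcp ⟨hcr, symb_inj (s := s) (h := h) (hmpmuM.1 c) him.1 hr1 ?_⟩
            rw [← hXM, hxA, ← hr3]
          have hcolle : (i : ℤ) ≤ J + s c := hOccA' c hcm i him.1 (by rw [← hXM]; exact hxA)
          have hP3 : XM = j + (h : ℤ) - 1 ∧ ¬(c ∈ rows ∧ i = pfun c) := ⟨hxA, hcp⟩
          have hP4 : ¬(XM = j + (h : ℤ)) := by omega
          by_cases hcolJ : (i : ℤ) = J + s c
          · have hmp : i + (s c' - s c).toNat = pfun c' := by omega
            have e4 : YM = j + (h : ℤ) - 1 := by rw [hYM, hmp]; exact hq3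
            have e2 : Y = j + (h : ℤ) := by rw [hY, hmp]; exact hq4
            have hP1 : c < c' ∧ X < Y ∧ ¬ InRow s h mu c' X := by
              refine ⟨hcc', by omega, ?_⟩
              rw [hsame, hxA]
              exact hnInA_mu c' hc'r
            have hP2 : ¬(c < c' ∧ XM < YM ∧ ¬ InRow s h muM c' XM) := by
              rintro ⟨-, hlt, -⟩; omega
            rw [if_pos hP1, if_neg hP2, if_pos hP3, if_neg hP4]
            try norm_num
          · have hilt : (i : ℤ) < J + s c := lt_of_le_of_ne hcolle hcolJ
            have hmlt : i + (s c' - s c).toNat < pfun c' := by omega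
            have hy1 : j + (h : ℤ) < YM := by rw [hYM]; exact (hup c' hc'r _ hm1 hmlt).1
            have hy2 : j + (h : ℤ) < Y := by rw [hY]; exact (hup c' hc'r _ hm1 hmlt).2
            have hP1 : c < c' ∧ X < Y ∧ ¬ InRow s h mu c' X := by
              refine ⟨hcc', by omega, ?_⟩
              rw [hsame, hxA]
              exact hnInA_mu c' hc'r
            have hP2 : ¬(c < c' ∧ XM < YM ∧ ¬ InRow s h muM c' XM) := by
              rintro ⟨-, -, hnin⟩
              apply hnin
              rw [hxA]
              exact hInA_muM c' hc'r
            rw [if_pos hP1, if_neg hP2, if_pos hP3, if_neg hP4]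
            try norm_num
        · by_cases hxB : XM = j + (h : ℤ)
          · have hcol : (i : ℤ) < J + s c := hOccB' c hcm i him.1 (by rw [← hXM]; exact hxB)
            have hmlt : i + (s c' - s c).toNat < pfun c' := by omega
            have hy1 : j + (h : ℤ) < YM := by rw [hYM]; exact (hup c' hc'r _ hm1 hmlt).1
            have hP1 : ¬(c < c' ∧ X < Y ∧ ¬ InRow s h mu c' X) := by
              rintro ⟨-, -, hnin⟩
              apply hnin
              rw [hsame, hxB]
              exact hInB_mu c' hc'r
            have hP2 : c < c' ∧ XM < YM ∧ ¬ InRow s h muM c' XM := by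
              refine ⟨hcc', by omega, ?_⟩
              rw [hxB]
              exact hnInB_muM c' hc'r
            have hP3 : ¬(XM = j + (h : ℤ) - 1 ∧ ¬(c ∈ rows ∧ i = pfun c)) := by
              rintro ⟨h1, -⟩; omega
            rw [if_neg hP1, if_pos hP2, if_neg hP3, if_pos hxB]
            try norm_num
          · have hIn := hInEq c' hc'r XM hxA hxB
            have hP3 : ¬(XM = j + (h : ℤ) - 1 ∧ ¬(c ∈ rows ∧ i = pfun c)) := by
              rintro ⟨h1, -⟩; exact hxA h1
            rw [if_neg hP3, if_neg hxB]
            by_cases hcolJ : (i : ℤ) = J + s c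
            · have hmp : i + (s c' - s c).toNat = pfun c' := by omega
              have e4 : YM = j + (h : ℤ) - 1 := by rw [hYM, hmp]; exact hq3
              have e2 : Y = j + (h : ℤ) := by rw [hY, hmp]; exact hq4
              have hxle : XM ≤ j + (h : ℤ) - 1 := by
                have := T1' c hcm (by omega)
                rw [(by omega : (J + s c).toNat = i)] at this
                rw [hXM]
                exact this
              by_cases hin : InRow s h muM c' XM
              · have hP1 : ¬(c < c' ∧ X < Y ∧ ¬ InRow s h mu c' X) := by
                  rintro ⟨-, -, hnin⟩
                  apply hnin
                  rw [hsame]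
                  exact hIn.mpr hin
                have hP2 : ¬(c < c' ∧ XM < YM ∧ ¬ InRow s h muM c' XM) := by
                  rintro ⟨-, -, hnin⟩; exact hnin hin
                rw [if_neg hP1, if_neg hP2]
                try norm_num
              · have hP1 : c < c' ∧ X < Y ∧ ¬ InRow s h mu c' X := by
                  refine ⟨hcc', by omega, ?_⟩
                  rw [hsame]
                  exact fun hh => hin (hIn.mp hh)
                have hP2 : c < c' ∧ XM < YM ∧ ¬ InRow s h muM c' XM := by
                  refine ⟨hcc', by omega, hin⟩
                rw [if_pos hP1, if_pos hP2]
                try norm_num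
            · have hmne : i + (s c' - s c).toNat ≠ pfun c' := by omega
              have hysame : Y = YM := by rw [hY, hYM]; exact hq5 _ hm1 hmne
              by_cases hcond : XM < YM ∧ ¬ InRow s h muM c' XM
              · have hP1 : c < c' ∧ X < Y ∧ ¬ InRow s h mu c' X := by
                  refine ⟨hcc', by omega, ?_⟩
                  rw [hsame]
                  exact fun hh => hcond.2 (hIn.mp hh)
                have hP2 : c < c' ∧ XM < YM ∧ ¬ InRow s h muM c' XM :=
                  ⟨hcc', hcond.1, hcond.2⟩
                rw [if_pos hP1, if_pos hP2]
                try norm_num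
              · have hP1 : ¬(c < c' ∧ X < Y ∧ ¬ InRow s h mu c' X) := by
                  rintro ⟨-, hlt, hnin⟩
                  rw [hsame, hysame] at hlt
                  rw [hsame] at hnin
                  exact hcond ⟨hlt, fun hh => hnin (hIn.mpr hh)⟩
                have hP2 : ¬(c < c' ∧ XM < YM ∧ ¬ InRow s h muM c' XM) := by
                  rintro ⟨-, h1, h2⟩; exact hcond ⟨h1, h2⟩
                rw [if_neg hP1, if_neg hP2]
                try norm_num
    · have hP3 : ¬(c' ∈ rows ∧ c < c') := fun hh => hc'r hh.1
      rw [if_neg hP3]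
      have hrowEq : ∀ q, 1 ≤ q → symbEntry s h mu c' q = symbEntry s h muM c' q :=
        fun q hq => harr2 c' hc'r q hq
      have hIn := inrow_congr (s := s) (h := h) hrowEq
      have hysame : Y = YM := by rw [hY, hYM]; exact hrowEq _ hm1
      by_cases hcp : c ∈ rows ∧ i = pfun c
      · obtain ⟨hcr, hip⟩ := hcp
        obtain ⟨hr1, hr2, hr3, hr4, hr5⟩ := hpf c hcr
        have hpj : (pfun c : ℤ) = J + s c := hpJ c hcr
        have hmJ : 1 ≤ J + s c' := by omega
        have hyle : YM ≤ j + (h : ℤ) - 1 := by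
          have := T1' c' hc'm hmJ
          rw [(by omega : (J + s c').toNat = i + (s c' - s c).toNat)] at this
          rw [hYM]
          exact this
        have e1 : X = j + (h : ℤ) := by rw [hX, hip]; exact hr4
        have e3 : XM = j + (h : ℤ) - 1 := by rw [hXM, hip]; exact hr3
        have hP1 : ¬(c < c' ∧ X < Y ∧ ¬ InRow s h mu c' X) := by
          rintro ⟨-, hlt, -⟩; omega
        have hP2 : ¬(c < c' ∧ XM < YM ∧ ¬ InRow s h muM c' XM) := by
          rintro ⟨-, hlt, -⟩; omega
        rw [if_neg hP1, if_neg hP2]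
        try norm_num
      · have hsame : X = XM := by
          rw [hX, hXM]; exact hEsame c i him.1 (not_and_or.mp hcp)
        by_cases hcond : XM < YM ∧ ¬ InRow s h muM c' XM
        · have hP1 : c < c' ∧ X < Y ∧ ¬ InRow s h mu c' X := by
            refine ⟨hcc', by omega, ?_⟩
            rw [hsame]
            exact fun hh => hcond.2 ((hIn XM).mp hh)
          have hP2 : c < c' ∧ XM < YM ∧ ¬ InRow s h muM c' XM :=
            ⟨hcc', hcond.1, hcond.2⟩
          rw [if_pos hP1, if_pos hP2]
          try norm_num
        · have hP1 : ¬(c < c' ∧ X < Y ∧ ¬ InRow s h mu c' X) := by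
            rintro ⟨-, hlt, hnin⟩
            rw [hsame, hysame] at hlt
            rw [hsame] at hnin
            exact hcond ⟨hlt, fun hh => hnin ((hIn XM).mpr hh)⟩
          have hP2 : ¬(c < c' ∧ XM < YM ∧ ¬ InRow s h muM c' XM) := by
            rintro ⟨-, h1, h2⟩; exact hcond ⟨h1, h2⟩
          rw [if_neg hP1, if_neg hP2]
          try norm_num
  have hper : ∀ t ∈ rows, ∀ c ∈ Finset.range l, ∀ i ∈ Finset.Icc 1 (((h : ℤ) + s c).toNat),
      (if c < t then
          ((if symbEntry s h muM c i = j + (h : ℤ) - 1 ∧ ¬(c ∈ rows ∧ i = pfun c) then (1 : ℤ) else 0)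
            - (if symbEntry s h muM c i = j + (h : ℤ) then (1 : ℤ) else 0))
        else 0)
      = (if c ∈ Finset.range (t + 1) then
          ((if symbEntry s h mu c i = j + (h : ℤ) - 1 then (1 : ℤ) else 0)
            - (if symbEntry s h muM c i = j + (h : ℤ) then (1 : ℤ) else 0))
        else 0) := by
    intro t ht c hcm i him
    rw [Finset.mem_range] at hcm
    rw [Finset.mem_Icc] at him
    by_cases hcr : c ∈ rows
    · obtain ⟨hr1, hr2, hr3, hr4, hr5⟩ := hpf c hcr
      have hA : ¬(symbEntry s h muM c i = j + (h : ℤ) - 1 ∧ ¬(c ∈ rows ∧ i = pfun c)) := by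
        rintro ⟨h1, hn⟩
        exact hn ⟨hcr, symb_inj (s := s) (h := h) (hmpmuM.1 c) him.1 hr1 (h1.trans hr3.symm)⟩
      have hB : ¬(symbEntry s h muM c i = j + (h : ℤ)) := hnoB_muM c hcr i him.1
      have hA2 : ¬(symbEntry s h mu c i = j + (h : ℤ) - 1) := hnoA_mu c hcr i him.1
      rw [if_neg hA, if_neg hB, if_neg hA2]
      simp
    · have hsame : symbEntry s h mu c i = symbEntry s h muM c i := harr2 c hcr i him.1
      have hne : c ≠ t := fun hh => hcr (hh ▸ ht)
      by_cases hct : c < t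
      · rw [if_pos hct, if_pos (Finset.mem_range.mpr (by omega))]
        simp only [hsame, and_iff_left (show ¬(c ∈ rows ∧ i = pfun c) from fun hh => hcr hh.1)]
      · rw [if_neg hct, if_neg (show c ∉ Finset.range (t + 1) by rw [Finset.mem_range]; omega)]
  -- assembling the sums
  have hrsub : rows ⊆ Finset.range l := fun c hc => Finset.mem_range.mpr (hrowlt c hc)
  have hcast : ∀ η : ℕ → ℕ →₀ ℕ, (Rstat l s h η : ℤ) =
      ∑ c ∈ Finset.range l, ∑ i ∈ Finset.Icc 1 (((h : ℤ) + s c).toNat), ∑ c' ∈ Finset.range l,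
        (if c < c' ∧ symbEntry s h η c i < symbEntry s h η c' (i + (s c' - s c).toNat) ∧
          ¬ InRow s h η c' (symbEntry s h η c i) then (1 : ℤ) else 0) := by
    intro η
    unfold Rstat RstatAt
    push_cast
    exact Finset.sum_congr rfl fun c _ => Finset.sum_congr rfl fun i _ =>
      Finset.natCast_card_filter _ _
  have hN : Nstat s h j rows muM mu =
      ∑ t ∈ rows, ∑ c ∈ Finset.range (t + 1), ∑ i ∈ Finset.Icc 1 (((h : ℤ) + s c).toNat),
        ((if symbEntry s h mu c i = j + (h : ℤ) - 1 then (1 : ℤ) else 0)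
          - (if symbEntry s h muM c i = j + (h : ℤ) then (1 : ℤ) else 0)) := by
    unfold Nstat countVal
    refine Finset.sum_congr rfl fun t _ => ?_
    rw [← Finset.sum_sub_distrib]
    refine Finset.sum_congr rfl fun c _ => ?_
    rw [Finset.natCast_card_filter, Finset.natCast_card_filter, ← Finset.sum_sub_distrib]
  have hfinal : (Rstat l s h mu : ℤ) - (Rstat l s h muM : ℤ)
      = Nstat s h j rows muM mu := by
    calc (Rstat l s h mu : ℤ) - (Rstat l s h muM : ℤ)
        = (∑ c ∈ Finset.range l, ∑ i ∈ Finset.Icc 1 (((h : ℤ) + s c).toNat), ∑ c' ∈ Finset.range l,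
            (if c < c' ∧ symbEntry s h mu c i < symbEntry s h mu c' (i + (s c' - s c).toNat) ∧
              ¬ InRow s h mu c' (symbEntry s h mu c i) then (1 : ℤ) else 0))
          - (∑ c ∈ Finset.range l, ∑ i ∈ Finset.Icc 1 (((h : ℤ) + s c).toNat), ∑ c' ∈ Finset.range l,
            (if c < c' ∧ symbEntry s h muM c i < symbEntry s h muM c' (i + (s c' - s c).toNat) ∧
              ¬ InRow s h muM c' (symbEntry s h muM c i) then (1 : ℤ) else 0)) := by
          rw [hcast mu, hcast muM]
      _ = ∑ c ∈ Finset.range l, ∑ i ∈ Finset.Icc 1 (((h : ℤ) + s c).toNat), ∑ c' ∈ Finset.range l,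
            ((if c < c' ∧ symbEntry s h mu c i < symbEntry s h mu c' (i + (s c' - s c).toNat) ∧
              ¬ InRow s h mu c' (symbEntry s h mu c i) then (1 : ℤ) else 0)
            - (if c < c' ∧ symbEntry s h muM c i < symbEntry s h muM c' (i + (s c' - s c).toNat) ∧
              ¬ InRow s h muM c' (symbEntry s h muM c i) then (1 : ℤ) else 0)) := by
          rw [← Finset.sum_sub_distrib]
          refine Finset.sum_congr rfl fun c _ => ?_
          rw [← Finset.sum_sub_distrib]
          refine Finset.sum_congr rfl fun i _ => ?_
          rw [← Finset.sum_sub_distrib]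
      _ = ∑ c ∈ Finset.range l, ∑ i ∈ Finset.Icc 1 (((h : ℤ) + s c).toNat), ∑ c' ∈ Finset.range l,
            (if c' ∈ rows ∧ c < c' then
              ((if symbEntry s h muM c i = j + (h : ℤ) - 1 ∧ ¬(c ∈ rows ∧ i = pfun c)
                  then (1 : ℤ) else 0)
                - (if symbEntry s h muM c i = j + (h : ℤ) then (1 : ℤ) else 0))
            else 0) :=
          Finset.sum_congr rfl fun c hc => Finset.sum_congr rfl fun i hi =>
            Finset.sum_congr rfl fun c' hc' => hdelta c' hc' c hc i hi
      _ = ∑ c ∈ Finset.range l, ∑ c' ∈ Finset.range l, ∑ i ∈ Finset.Icc 1 (((h : ℤ) + s c).toNat),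
            (if c' ∈ rows ∧ c < c' then
              ((if symbEntry s h muM c i = j + (h : ℤ) - 1 ∧ ¬(c ∈ rows ∧ i = pfun c)
                  then (1 : ℤ) else 0)
                - (if symbEntry s h muM c i = j + (h : ℤ) then (1 : ℤ) else 0))
            else 0) :=
          Finset.sum_congr rfl fun c _ => Finset.sum_comm
      _ = ∑ c' ∈ Finset.range l, ∑ c ∈ Finset.range l, ∑ i ∈ Finset.Icc 1 (((h : ℤ) + s c).toNat),
            (if c' ∈ rows ∧ c < c' then
              ((if symbEntry s h muM c i = j + (h : ℤ) - 1 ∧ ¬(c ∈ rows ∧ i = pfun c)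
                  then (1 : ℤ) else 0)
                - (if symbEntry s h muM c i = j + (h : ℤ) then (1 : ℤ) else 0))
            else 0) := Finset.sum_comm
      _ = ∑ c' ∈ Finset.range l,
            (if c' ∈ rows then
              ∑ c ∈ Finset.range l, ∑ i ∈ Finset.Icc 1 (((h : ℤ) + s c).toNat),
                (if c < c' then
                  ((if symbEntry s h muM c i = j + (h : ℤ) - 1 ∧ ¬(c ∈ rows ∧ i = pfun c)
                      then (1 : ℤ) else 0)
                    - (if symbEntry s h muM c i = j + (h : ℤ) then (1 : ℤ) else 0))
                else 0)
            else 0) := by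
          refine Finset.sum_congr rfl fun c' _ => ?_
          by_cases hr : c' ∈ rows <;> simp [hr]
      _ = ∑ t ∈ Finset.range l ∩ rows,
            ∑ c ∈ Finset.range l, ∑ i ∈ Finset.Icc 1 (((h : ℤ) + s c).toNat),
              (if c < t then
                ((if symbEntry s h muM c i = j + (h : ℤ) - 1 ∧ ¬(c ∈ rows ∧ i = pfun c)
                    then (1 : ℤ) else 0)
                  - (if symbEntry s h muM c i = j + (h : ℤ) then (1 : ℤ) else 0))
              else 0) := Finset.sum_ite_mem _ _ _
      _ = ∑ t ∈ rows,
            ∑ c ∈ Finset.range l, ∑ i ∈ Finset.Icc 1 (((h : ℤ) + s c).toNat),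
              (if c < t then
                ((if symbEntry s h muM c i = j + (h : ℤ) - 1 ∧ ¬(c ∈ rows ∧ i = pfun c)
                    then (1 : ℤ) else 0)
                  - (if symbEntry s h muM c i = j + (h : ℤ) then (1 : ℤ) else 0))
              else 0) := by rw [Finset.inter_eq_right.mpr hrsub]
      _ = ∑ t ∈ rows, ∑ c ∈ Finset.range l, ∑ i ∈ Finset.Icc 1 (((h : ℤ) + s c).toNat),
            (if c ∈ Finset.range (t + 1) then
              ((if symbEntry s h mu c i = j + (h : ℤ) - 1 then (1 : ℤ) else 0)
                - (if symbEntry s h muM c i = j + (h : ℤ) then (1 : ℤ) else 0))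
            else 0) :=
          Finset.sum_congr rfl fun t ht => Finset.sum_congr rfl fun c hc =>
            Finset.sum_congr rfl fun i hi => hper t ht c hc i hi
      _ = ∑ t ∈ rows, ∑ c ∈ Finset.range l,
            (if c ∈ Finset.range (t + 1) then
              ∑ i ∈ Finset.Icc 1 (((h : ℤ) + s c).toNat),
                ((if symbEntry s h mu c i = j + (h : ℤ) - 1 then (1 : ℤ) else 0)
                  - (if symbEntry s h muM c i = j + (h : ℤ) then (1 : ℤ) else 0))
            else 0) := by
          refine Finset.sum_congr rfl fun t _ => Finset.sum_congr rfl fun c _ => ?_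
          by_cases hc : c ∈ Finset.range (t + 1) <;> simp [hc]
      _ = ∑ t ∈ rows, ∑ c ∈ Finset.range l ∩ Finset.range (t + 1),
            ∑ i ∈ Finset.Icc 1 (((h : ℤ) + s c).toNat),
              ((if symbEntry s h mu c i = j + (h : ℤ) - 1 then (1 : ℤ) else 0)
                - (if symbEntry s h muM c i = j + (h : ℤ) then (1 : ℤ) else 0)) :=
          Finset.sum_congr rfl fun t _ => Finset.sum_ite_mem _ _ _
      _ = ∑ t ∈ rows, ∑ c ∈ Finset.range (t + 1),
            ∑ i ∈ Finset.Icc 1 (((h : ℤ) + s c).toNat),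
              ((if symbEntry s h mu c i = j + (h : ℤ) - 1 then (1 : ℤ) else 0)
                - (if symbEntry s h muM c i = j + (h : ℤ) then (1 : ℤ) else 0)) := by
          refine Finset.sum_congr rfl fun t ht => ?_
          rw [Finset.inter_eq_right.mpr (Finset.range_subset_range.mpr
            (by have := hrowlt t ht; omega))]
      _ = Nstat s h j rows muM mu := hN.symm
  exact hfinal.symm

end AK
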